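/- arXiv:1202.4816 — 2 statements merged into one kernel-verified Lean document; each statement's English description precedes it below -/
import Mathlib

section
/- Let H be a graph, k ≥ 1, and suppose there exists a k-embedding i of a 3-regular tree T into H. Then H is of exponential growth; more precisely, for every vertex v of T and every natural number n, the number of vertices of H joined to i(v) by a path of length at most k·n is at least 3·(2^n − 1) + 1, so the ball of radius m around i(v) in H has at least 2^{⌊m/k⌋} vertices for every m. -/
/-!
Root the tree `T` at `v`. Every vertex other than `v` has exactly one neighbour closer to `v`
(its parent) and all its other neighbours are one step farther away (its children), so a vertex
of degree at least three has at least two children, while `v` itself has three. Distinct vertices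
have disjoint sets of children, hence the sphere of radius `n + 1` around `v` has at least
`3 * 2 ^ n` vertices and the ball of radius `n` at least `3 * (2 ^ n - 1) + 1`. A `k`-embedding
turns a walk of length `n` in `T` into a walk of length at most `k * n` in `H`, and is injective,
so it carries the ball of radius `n` in `T` into the ball of radius `k * n` in `H` without
losing vertices.
-/

open Set

theorem Set.two_mul_encard_le_of_pairwiseDisjoint {ι α : Type*} {s : Set ι} {t : Set α}
    {c : ι → Set α} (hc : s.PairwiseDisjoint c) (hct : ∀ i ∈ s, c i ⊆ t)
    (htwo : ∀ i ∈ s, 2 ≤ (c i).encard) : 2 * s.encard ≤ t.encard := by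
  have hpair : ∀ i ∈ s, ∃ a b, a ∈ c i ∧ b ∈ c i ∧ a ≠ b := fun i hi =>
    one_lt_encard_iff.mp (lt_of_lt_of_le (by norm_num) (htwo i hi))
  obtain hs | ⟨i₀, hi₀⟩ := s.eq_empty_or_nonempty
  · simp [hs]
  have : Nonempty α := ⟨(hpair i₀ hi₀).choose⟩
  choose! f g hf hg hfg using hpair
  have hf_inj : InjOn f s := fun i hi j hj hij =>
    hc.elim_set hi hj (f i) (hf i hi) (hij ▸ hf j hj)
  have hg_inj : InjOn g s := fun i hi j hj hij =>
    hc.elim_set hi hj (g i) (hg i hi) (hij ▸ hg j hj)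
  have hdisj : Disjoint (f '' s) (g '' s) := by
    rw [disjoint_left]
    rintro _ ⟨i, hi, rfl⟩ ⟨j, hj, hji⟩
    obtain rfl := hc.elim_set hi hj (f i) (hf i hi) (hji ▸ hg j hj)
    exact hfg i hi hji.symm
  have hsub : f '' s ∪ g '' s ⊆ t := by
    rintro _ (⟨i, hi, rfl⟩ | ⟨i, hi, rfl⟩)
    exacts [hct i hi (hf i hi), hct i hi (hg i hi)]
  calc 2 * s.encard = (f '' s).encard + (g '' s).encard := by
        rw [hf_inj.encard_image, hg_inj.encard_image, two_mul]
    _ = (f '' s ∪ g '' s).encard := (encard_union_eq hdisj).symm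
    _ ≤ t.encard := encard_le_encard hsub

namespace SimpleGraph

variable {V : Type*} {T : SimpleGraph V}

/-- The children of `w` in `T` rooted at `v`. -/
def childSet (T : SimpleGraph V) (v w : V) : Set V :=
  {x | T.Adj w x ∧ T.dist v x = T.dist v w + 1}

theorem IsTree.mem_support_of_mem_childSet (hT : T.IsTree) {v w x : V}
    (hx : x ∈ T.childSet v w) {q : T.Walk v x} (hq : q.IsPath) : w ∈ q.support := by
  classical
  by_contra hw
  obtain ⟨p, hp, hpl⟩ := hT.connected.exists_path_of_dist v w
  have hxp : x ∈ p.support :=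
    hT.isAcyclic.mem_support_of_ne_mem_support_of_adj_of_isPath hp hq hx.1 hw
  have : T.dist v x ≤ p.length :=
    (dist_le (p.takeUntil x hxp)).trans (p.length_takeUntil_le_length hxp)
  have := hx.2
  omega

theorem IsTree.eq_of_mem_childSet (hT : T.IsTree) {v x w₁ w₂ : V}
    (h₁ : x ∈ T.childSet v w₁) (h₂ : x ∈ T.childSet v w₂) : w₁ = w₂ := by
  obtain ⟨q, hq, -⟩ := hT.connected.exists_path_of_dist v x
  have hparent : ∀ w, x ∈ T.childSet v w → w = q.penultimate := fun w hw =>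
    hT.isAcyclic.eq_penultimate_of_adj_end hq hw.1.symm (hT.mem_support_of_mem_childSet hw hq)
  exact (hparent w₁ h₁).trans (hparent w₂ h₂).symm

theorem IsTree.pairwiseDisjoint_childSet (hT : T.IsTree) (v : V) (s : Set V) :
    s.PairwiseDisjoint (T.childSet v) := fun _ _ _ _ hne =>
  Set.disjoint_left.mpr fun _ h₁ h₂ => hne (hT.eq_of_mem_childSet h₁ h₂)

theorem IsTree.encard_neighborSet_le_encard_childSet_add_one (hT : T.IsTree) (v w : V) :
    (T.neighborSet w).encard ≤ (T.childSet v w).encard + 1 := by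
  have hparents : {x | w ∈ T.childSet v x}.encard ≤ 1 :=
    encard_le_one_iff.mpr fun _ _ h₁ h₂ => hT.eq_of_mem_childSet h₁ h₂
  have hsub : T.neighborSet w ⊆ T.childSet v w ∪ {x | w ∈ T.childSet v x} := by
    intro x hx
    rcases hT.dist_eq_dist_add_one_of_adj v hx with h | h
    · exact Or.inr ⟨hx.symm, h⟩
    · exact Or.inl ⟨hx, h⟩
  calc (T.neighborSet w).encard
      ≤ (T.childSet v w ∪ {x | w ∈ T.childSet v x}).encard := encard_le_encard hsub
    _ ≤ (T.childSet v w).encard + {x | w ∈ T.childSet v x}.encard := encard_union_le _ _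
    _ ≤ (T.childSet v w).encard + 1 := by gcongr

theorem IsTree.three_mul_two_pow_le_encard_sphere (hT : T.IsTree)
    (hdeg : ∀ w, 3 ≤ (T.neighborSet w).encard) (v : V) (n : ℕ) :
    3 * 2 ^ n ≤ {w | T.dist v w = n + 1}.encard := by
  induction n with
  | zero =>
    have hsphere : {w | T.dist v w = 0 + 1} = T.neighborSet v := by
      ext w; simp [dist_eq_one_iff_adj]
    rw [hsphere]; simpa using hdeg v
  | succ n ih =>
    have hchild :
        ∀ w ∈ {w | T.dist v w = n + 1}, T.childSet v w ⊆ {w | T.dist v w = n + 1 + 1} :=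
      fun w hw x hx => by rw [mem_ofPred_eq] at hw ⊢; rw [hx.2, hw]
    have htwo : ∀ w ∈ {w | T.dist v w = n + 1}, 2 ≤ (T.childSet v w).encard := fun w _ => by
      have := (hdeg w).trans (hT.encard_neighborSet_le_encard_childSet_add_one v w)
      exact (ENat.add_le_add_iff_right ENat.one_ne_top).mp this
    calc 3 * 2 ^ (n + 1) = 2 * (3 * 2 ^ n) := by ring
      _ ≤ 2 * {w | T.dist v w = n + 1}.encard := by gcongr
      _ ≤ _ := two_mul_encard_le_of_pairwiseDisjoint
          (hT.pairwiseDisjoint_childSet v _) hchild htwo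

theorem IsTree.three_mul_two_pow_sub_one_add_one_le_encard_ball (hT : T.IsTree)
    (hdeg : ∀ w, 3 ≤ (T.neighborSet w).encard) (v : V) (n : ℕ) :
    ((3 * (2 ^ n - 1) + 1 : ℕ) : ℕ∞) ≤ {w | T.dist v w ≤ n}.encard := by
  induction n with
  | zero => simpa using ⟨v, Or.inl rfl⟩
  | succ n ih =>
    have hdisj : Disjoint {w | T.dist v w ≤ n} {w | T.dist v w = n + 1} :=
      Set.disjoint_left.mpr fun w (h₁ : _ ≤ n) h₂ => by rw [mem_ofPred_eq] at h₂; omega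
    have hsub :
        {w | T.dist v w ≤ n} ∪ {w | T.dist v w = n + 1} ⊆ {w | T.dist v w ≤ n + 1} := by
      rintro w (h | h) <;> simp only [mem_ofPred_eq] at h ⊢ <;> omega
    have hcount : 3 * (2 ^ (n + 1) - 1) + 1 = 3 * (2 ^ n - 1) + 1 + 3 * 2 ^ n := by
      have := Nat.one_le_two_pow (n := n)
      rw [pow_succ]; omega
    calc ((3 * (2 ^ (n + 1) - 1) + 1 : ℕ) : ℕ∞)
        = ((3 * (2 ^ n - 1) + 1 : ℕ) : ℕ∞) + 3 * 2 ^ n := by rw [hcount]; push_cast; rfl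
      _ ≤ {w | T.dist v w ≤ n}.encard + {w | T.dist v w = n + 1}.encard :=
          add_le_add ih (hT.three_mul_two_pow_le_encard_sphere hdeg v n)
      _ = ({w | T.dist v w ≤ n} ∪ {w | T.dist v w = n + 1}).encard :=
          (encard_union_eq hdisj).symm
      _ ≤ _ := encard_le_encard hsub

theorem exists_walk_length_le_mul_length {W : Type*} {H : SimpleGraph W} {k : ℕ}
    {i : V → W}
    (hemb : ∀ v w : V, T.Adj v w → ∃ p : H.Walk (i v) (i w), p.length ≤ k)
    {a b : V} (p : T.Walk a b) : ∃ q : H.Walk (i a) (i b), q.length ≤ k * p.length := by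
  induction p with
  | nil => exact ⟨.nil, by simp⟩
  | cons hadj p ih =>
    obtain ⟨q₁, hq₁⟩ := hemb _ _ hadj
    obtain ⟨q₂, hq₂⟩ := ih
    refine ⟨q₁.append q₂, ?_⟩
    rw [Walk.length_append, Walk.length_cons, mul_add_one]
    omega

theorem Connected.image_ball_subset {W : Type*} {H : SimpleGraph W} {k : ℕ} {i : V → W}
    (hT : T.Connected)
    (hemb : ∀ v w : V, T.Adj v w → ∃ p : H.Walk (i v) (i w), p.length ≤ k)
    (v : V) (n : ℕ) :
    i '' {w | T.dist v w ≤ n} ⊆ {u | ∃ q : H.Walk (i v) u, q.length ≤ k * n} := by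
  rintro _ ⟨w, hw, rfl⟩
  obtain ⟨p, hp⟩ := hT.exists_walk_length_eq_dist v w
  obtain ⟨q, hq⟩ := exists_walk_length_le_mul_length hemb p
  exact ⟨q, hq.trans (Nat.mul_le_mul_left k (hp ▸ hw))⟩

end SimpleGraph

theorem kEmbedding_threeRegularTree_exponential_growth_general {V W : Type*}
    (T : SimpleGraph V) (H : SimpleGraph W)
    (hconn : T.Connected) (hacyc : T.IsAcyclic)
    (hreg : ∀ v : V, (T.neighborSet v).ncard = 3)
    (k : ℕ) (i : V → W) (hinj : Function.Injective i)
    (hemb : ∀ v w : V, T.Adj v w → ∃ p : H.Walk (i v) (i w), p.length ≤ k) :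
    ∀ v : V,
      (∀ n : ℕ, ((3 * (2 ^ n - 1) + 1 : ℕ) : ℕ∞) ≤
          {u : W | ∃ p : H.Walk (i v) u, p.length ≤ k * n}.encard) ∧
      (∀ m : ℕ, ((2 ^ (m / k) : ℕ) : ℕ∞) ≤
          {u : W | ∃ p : H.Walk (i v) u, p.length ≤ m}.encard) := by
  intro v
  have hdeg : ∀ w, 3 ≤ (T.neighborSet w).encard := fun w => by
    rw [← (finite_of_ncard_ne_zero (by rw [hreg w]; norm_num)).cast_ncard_eq, hreg w]
    rfl
  have hball (n : ℕ) : ((3 * (2 ^ n - 1) + 1 : ℕ) : ℕ∞) ≤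
      {u : W | ∃ p : H.Walk (i v) u, p.length ≤ k * n}.encard :=
    calc ((3 * (2 ^ n - 1) + 1 : ℕ) : ℕ∞)
        ≤ {w | T.dist v w ≤ n}.encard :=
          SimpleGraph.IsTree.three_mul_two_pow_sub_one_add_one_le_encard_ball ⟨hconn, hacyc⟩
            hdeg v n
      _ = (i '' {w | T.dist v w ≤ n}).encard := hinj.injOn.encard_image.symm
      _ ≤ _ := encard_le_encard (hconn.image_ball_subset hemb v n)
  refine ⟨hball, fun m => ?_⟩
  calc ((2 ^ (m / k) : ℕ) : ℕ∞)
      ≤ ((3 * (2 ^ (m / k) - 1) + 1 : ℕ) : ℕ∞) := by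
        have := Nat.one_le_two_pow (n := m / k)
        exact_mod_cast (by omega)
    _ ≤ _ := hball (m / k)
    _ ≤ _ := encard_le_encard <| by
        rintro _ ⟨p, hp⟩
        exact ⟨p, hp.trans (Nat.mul_div_le m k)⟩

/-- If there is a `k`-embedding (`k ≥ 1`) of a 3-regular tree `T` into a graph `H`,
then `H` is of exponential growth: for every vertex `v` of `T`, the ball of radius
`k * n` around `i v` in `H` contains at least `3 * (2 ^ n - 1) + 1` vertices, and
hence the ball of radius `m` around `i v` contains at least `2 ^ (m / k)` vertices. -/
theorem kEmbedding_threeRegularTree_exponential_growth {V W : Type*}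
    (T : SimpleGraph V) (H : SimpleGraph W)
    (hconn : T.Connected) (hacyc : T.IsAcyclic)
    (hreg : ∀ v : V, (T.neighborSet v).ncard = 3)
    (k : ℕ) (hk : 1 ≤ k) (i : V → W) (hinj : Function.Injective i)
    (hemb : ∀ v w : V, T.Adj v w → ∃ p : H.Walk (i v) (i w), p.length ≤ k) :
    ∀ v : V,
      (∀ n : ℕ, ((3 * (2 ^ n - 1) + 1 : ℕ) : ℕ∞) ≤
          {u : W | ∃ p : H.Walk (i v) u, p.length ≤ k * n}.encard) ∧
      (∀ m : ℕ, ((2 ^ (m / k) : ℕ) : ℕ∞) ≤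
          {u : W | ∃ p : H.Walk (i v) u, p.length ≤ m}.encard) :=
  kEmbedding_threeRegularTree_exponential_growth_general T H hconn hacyc hreg k i hinj hemb
end

section
/- Let p and q be Farey neighbours in ℚ∞. Then there exist exactly two elements w of ℚ∞ such that {p, q, w} is a Farey triple, namely w = p⊕q and w = p⊖q; moreover p⊕q ≠ p⊖q. -/
/-! Writing `v(x) = (d(x), r(x)) ∈ ℤ²`, Farey neighbours `p, q` give a basis of `ℤ²` of
determinant `±1`. By Cramer's rule, a common neighbour `w` of `p` and `q` has
`v(w) = ±(v(p) ± v(q))`, i.e. `w = p ⊕ q` or `w = p ⊖ q`; conversely both of these are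
neighbours of `p` and `q`, and they are distinct because `Δ(p ⊕ q, p ⊖ q) = 2`. -/

/-- `ℚ∞ = ℚ ∪ {∞}`, ordered with `∞ = ⊤` as the greatest element. -/
abbrev QInf : Type := WithTop ℚ

/-- The numerator `d(q)` of the reduced representation `q = d(q)/r(q)`; `d(∞) = 1`. -/
def fnum : QInf → ℤ := WithTop.recTopCoe 1 (fun q => q.num)

/-- The denominator `r(q)` of the reduced representation `q = d(q)/r(q)`; `r(∞) = 0`. -/
def fden : QInf → ℤ := WithTop.recTopCoe 0 (fun q => (q.den : ℤ))

/-- The element of `ℚ∞` represented by the fraction `a / b`: it is `∞` if `b = 0`,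
and otherwise the rational number `a / b` (normalized so that the denominator is
positive and the fraction is in lowest terms). -/
def fmk (a b : ℤ) : QInf := if b = 0 then (⊤ : QInf) else (((a : ℚ) / (b : ℚ)) : ℚ)

/-- The Farey distance `Δ(p,q) = |d(p)r(q) - d(q)r(p)|`. -/
def fdist (p q : QInf) : ℤ := |fnum p * fden q - fnum q * fden p|

/-- `p` and `q` are Farey neighbours if `Δ(p,q) = 1`. -/
def FareyNbr (p q : QInf) : Prop := fdist p q = 1

/-- The Farey sum `p ⊕ q = (d(p) + d(q)) / (r(p) + r(q))`. -/
def fsum (p q : QInf) : QInf := fmk (fnum p + fnum q) (fden p + fden q)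

/-- The Farey difference `p ⊖ q = (d(p) - d(q)) / (r(p) - r(q))`. -/
def fdiff (p q : QInf) : QInf := fmk (fnum p - fnum q) (fden p - fden q)

/-- A Farey triple: a three-element subset of `ℚ∞` whose elements are pairwise
Farey neighbours. -/
def IsFareyTriple (s : Set QInf) : Prop := s.ncard = 3 ∧ s.Pairwise FareyNbr

/-- The element replacing `p` in the mutation of the Farey triple `{p, q, r}` in
direction `p`: it is `q ⊖ r` if `p` lies strictly between `q` and `r`, and `q ⊕ r`
otherwise. -/
def fareyMutEl (p q r : QInf) : QInf :=
  if (q < p ∧ p < r) ∨ (r < p ∧ p < q) then fdiff q r else fsum q r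

/-- The mutation of the Farey triple `{p, q, r}` in direction `p`. -/
def fareyMut (p q r : QInf) : Set QInf := {fareyMutEl p q r, q, r}

/-- The complexity `c(q) = |d(q)| + r(q) + |d(q) - r(q)|`. -/
def complexity (x : QInf) : ℤ := |fnum x| + fden x + |fnum x - fden x|

def fdet (x y : QInf) : ℤ := fnum x * fden y - fnum y * fden x

/-- `p ⊕ q` and `p ⊖ q` are the cases `s = 1` and `s = -1`. -/
def fcomb (s : ℤ) (p q : QInf) : QInf := fmk (fnum p + s * fnum q) (fden p + s * fden q)

@[simp] lemma fnum_top : fnum ⊤ = 1 := rfl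
@[simp] lemma fden_top : fden ⊤ = 0 := rfl
@[simp] lemma fnum_coe (x : ℚ) : fnum (x : QInf) = x.num := rfl
@[simp] lemma fden_coe (x : ℚ) : fden (x : QInf) = (x.den : ℤ) := rfl

lemma fcomb_one (p q : QInf) : fcomb 1 p q = fsum p q := by
  simp only [fcomb, fsum, one_mul]

lemma fcomb_neg_one (p q : QInf) : fcomb (-1) p q = fdiff p q := by
  simp only [fcomb, fdiff, neg_one_mul, ← sub_eq_add_neg]

lemma fareyNbr_iff_isUnit_fdet {x y : QInf} : FareyNbr x y ↔ IsUnit (fdet x y) :=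
  Int.isUnit_iff_abs_eq.symm

lemma FareyNbr.symm {x y : QInf} (h : FareyNbr x y) : FareyNbr y x := by
  rwa [FareyNbr, fdist, abs_sub_comm]

lemma FareyNbr.ne {x y : QInf} (h : FareyNbr x y) : x ≠ y := by
  rintro rfl
  simp [FareyNbr, fdist] at h

lemma isCoprime_fnum_fden (x : QInf) : IsCoprime (fnum x) (fden x) := by
  cases x using WithTop.recTopCoe with
  | top => exact isCoprime_one_left
  | coe x => exact Int.isCoprime_iff_gcd_eq_one.mpr x.reduced

lemma fmk_fnum_fden (x : QInf) : fmk (fnum x) (fden x) = x := by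
  cases x using WithTop.recTopCoe with
  | top => simp [fmk]
  | coe x =>
    simp only [fmk, fnum_coe, fden_coe, Nat.cast_eq_zero, x.den_ne_zero, ↓reduceIte]
    exact_mod_cast Rat.num_divInt_den x

lemma fmk_unit_mul {u : ℤ} (hu : IsUnit u) (a b : ℤ) : fmk (u * a) (u * b) = fmk a b := by
  rcases Int.isUnit_iff.mp hu with rfl | rfl
  · simp only [one_mul]
  · by_cases hb : b = 0
    · simp [fmk, hb]
    · simp only [fmk, neg_one_mul, neg_eq_zero, hb, ↓reduceIte, Int.cast_neg, neg_div_neg_eq]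

lemma fnum_fden_fmk_of_pos {a b : ℤ} (hb : 0 < b) (h : IsCoprime a b) :
    fnum (fmk a b) = a ∧ fden (fmk a b) = b := by
  have h' := Int.isCoprime_iff_gcd_eq_one.mp h
  simp only [fmk, hb.ne', ↓reduceIte, fnum_coe, fden_coe]
  exact ⟨Rat.num_div_eq_of_coprime hb h', Rat.den_div_eq_of_coprime hb h'⟩

lemma exists_fnum_fden_fmk {a b : ℤ} (h : IsCoprime a b) :
    ∃ ε : ℤ, IsUnit ε ∧ fnum (fmk a b) = ε * a ∧ fden (fmk a b) = ε * b := by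
  rcases lt_trichotomy b 0 with hb | rfl | hb
  · refine ⟨-1, isUnit_one.neg, ?_⟩
    rw [← fmk_unit_mul isUnit_one.neg]
    exact fnum_fden_fmk_of_pos (by omega) (by simpa using h.neg_neg)
  · have ha := isCoprime_zero_right.mp h
    exact ⟨a, ha, by simp [fmk, Int.isUnit_mul_self ha]⟩
  · exact ⟨1, isUnit_one, by simpa using fnum_fden_fmk_of_pos hb h⟩

lemma fdist_fmk_fmk {a b c d : ℤ} (hab : IsCoprime a b) (hcd : IsCoprime c d) :
    fdist (fmk a b) (fmk c d) = |a * d - c * b| := by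
  obtain ⟨ε, hε, hnum, hden⟩ := exists_fnum_fden_fmk hab
  obtain ⟨δ, hδ, hnum', hden'⟩ := exists_fnum_fden_fmk hcd
  rw [fdist, hnum, hden, hnum', hden',
    show ε * a * (δ * d) - δ * c * (ε * b) = (ε * δ) * (a * d - c * b) by ring,
    abs_mul, Int.isUnit_iff_abs_eq.mp (hε.mul hδ), one_mul]

lemma fdist_fmk {a b : ℤ} (x : QInf) (h : IsCoprime a b) :
    fdist x (fmk a b) = |fnum x * b - a * fden x| := by
  conv_lhs => rw [← fmk_fnum_fden x]
  exact fdist_fmk_fmk (isCoprime_fnum_fden x) h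

/-- The determinant of `(p + s q, q)` is that of `(p, q)`, so a unit. -/
lemma FareyNbr.isCoprime_fcomb {p q : QInf} (h : FareyNbr p q) (s : ℤ) :
    IsCoprime (fnum p + s * fnum q) (fden p + s * fden q) := by
  have hE := Int.isUnit_mul_self (fareyNbr_iff_isUnit_fdet.mp h)
  exact ⟨fden q * fdet p q, -fnum q * fdet p q, by rw [← hE, fdet]; ring⟩

lemma FareyNbr.fareyNbr_fcomb_left {p q : QInf} (h : FareyNbr p q) {s : ℤ} (hs : IsUnit s) :
    FareyNbr p (fcomb s p q) := by
  rw [FareyNbr, fcomb, fdist_fmk p (h.isCoprime_fcomb s),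
    show fnum p * (fden p + s * fden q) - (fnum p + s * fnum q) * fden p = s * fdet p q by
      rw [fdet]; ring,
    abs_mul, Int.isUnit_iff_abs_eq.mp hs, one_mul]
  exact h

lemma FareyNbr.fareyNbr_fcomb_right {p q : QInf} (h : FareyNbr p q) (s : ℤ) :
    FareyNbr q (fcomb s p q) := by
  rw [FareyNbr, fcomb, fdist_fmk q (h.isCoprime_fcomb s),
    show fnum q * (fden p + s * fden q) - (fnum p + s * fnum q) * fden q = -fdet p q by
      rw [fdet]; ring,
    abs_neg]
  exact h

lemma FareyNbr.fsum_ne_fdiff {p q : QInf} (h : FareyNbr p q) : fsum p q ≠ fdiff p q := by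
  have hdist : fdist (fsum p q) (fdiff p q) = 2 := by
    rw [← fcomb_one, ← fcomb_neg_one, fcomb, fcomb,
      fdist_fmk_fmk (h.isCoprime_fcomb 1) (h.isCoprime_fcomb (-1)),
      show (fnum p + 1 * fnum q) * (fden p + -1 * fden q) - (fnum p + -1 * fnum q) *
        (fden p + 1 * fden q) = -2 * fdet p q by rw [fdet]; ring,
      abs_mul, show |fdet p q| = 1 from h]
    norm_num
  intro heq
  simp [heq, fdist] at hdist

/-- Cramer's rule for the vectors `(d(x), r(x))` in `ℤ²`. -/
lemma fnum_mul_fdet (p q w : QInf) :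
    fnum w * fdet p q = fdet w q * fnum p + fdet p w * fnum q := by
  simp only [fdet]; ring

lemma fden_mul_fdet (p q w : QInf) :
    fden w * fdet p q = fdet w q * fden p + fdet p w * fden q := by
  simp only [fdet]; ring

lemma FareyNbr.eq_fcomb {p q w : QInf} (hpq : FareyNbr p q) (hqw : FareyNbr q w) :
    w = fcomb (fdet w q * fdet p w) p q := by
  have hE := Int.isUnit_mul_self (fareyNbr_iff_isUnit_fdet.mp hpq)
  have hA := Int.isUnit_mul_self (fareyNbr_iff_isUnit_fdet.mp hqw.symm)
  have hunit : IsUnit (fdet p q * fdet w q) :=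
    (fareyNbr_iff_isUnit_fdet.mp hpq).mul (fareyNbr_iff_isUnit_fdet.mp hqw.symm)
  rw [fcomb, ← fmk_unit_mul hunit]
  conv_lhs => rw [← fmk_fnum_fden w]
  congr 1
  · linear_combination -fnum w * hE - fdet p q * fdet p w * fnum q * hA +
      fdet p q * fnum_mul_fdet p q w
  · linear_combination -fden w * hE - fdet p q * fdet p w * fden q * hA +
      fdet p q * fden_mul_fdet p q w

lemma FareyNbr.eq_fsum_or_eq_fdiff {p q w : QInf} (hpq : FareyNbr p q) (hpw : FareyNbr p w)
    (hqw : FareyNbr q w) : w = fsum p q ∨ w = fdiff p q := by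
  have hs : IsUnit (fdet w q * fdet p w) :=
    (fareyNbr_iff_isUnit_fdet.mp hqw.symm).mul (fareyNbr_iff_isUnit_fdet.mp hpw)
  have hw := hpq.eq_fcomb hqw
  rcases Int.isUnit_iff.mp hs with hs | hs
  · left; rw [hw, hs, fcomb_one]
  · right; rw [hw, hs, fcomb_neg_one]

lemma Set.ncard_triple_eq_three_iff {α : Type*} {a b c : α} :
    ({a, b, c} : Set α).ncard = 3 ↔ a ≠ b ∧ a ≠ c ∧ b ≠ c := by
  classical
  rw [← Finset.card_triple_eq_three_iff, ← Set.ncard_coe_finset, Finset.coe_insert,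
    Finset.coe_pair]

lemma isFareyTriple_iff {p q w : QInf} :
    IsFareyTriple {p, q, w} ↔ FareyNbr p q ∧ FareyNbr p w ∧ FareyNbr q w := by
  simp only [IsFareyTriple, Set.ncard_triple_eq_three_iff, Set.pairwise_insert,
    Set.pairwise_singleton, Set.mem_insert_iff, Set.mem_singleton_iff, forall_eq_or_imp,
    forall_eq, true_and]
  constructor
  · rintro ⟨⟨npq, npw, nqw⟩, hqw, hpq, hpw⟩
    exact ⟨(hpq npq).1, (hpw npw).1, (hqw nqw).1⟩
  · rintro ⟨hpq, hpw, hqw⟩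
    exact ⟨⟨hpq.ne, hpw.ne, hqw.ne⟩, fun _ => ⟨hqw, hqw.symm⟩,
      fun _ => ⟨hpq, hpq.symm⟩, fun _ => ⟨hpw, hpw.symm⟩⟩

/-- If `p` and `q` are Farey neighbours, then there are exactly two elements `w` of
`ℚ∞` such that `{p, q, w}` is a Farey triple, namely `w = p ⊕ q` and `w = p ⊖ q`;
moreover these two elements are distinct. -/
theorem fareyNbr_triple_completions (p q : QInf) (h : FareyNbr p q) :
    (∀ w : QInf, IsFareyTriple {p, q, w} ↔ (w = fsum p q ∨ w = fdiff p q)) ∧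
      fsum p q ≠ fdiff p q := by
  refine ⟨fun w => ?_, h.fsum_ne_fdiff⟩
  rw [isFareyTriple_iff, and_iff_right h]
  constructor
  · rintro ⟨hpw, hqw⟩
    exact h.eq_fsum_or_eq_fdiff hpw hqw
  · rintro (rfl | rfl)
    · rw [← fcomb_one]
      exact ⟨h.fareyNbr_fcomb_left isUnit_one, h.fareyNbr_fcomb_right 1⟩
    · rw [← fcomb_neg_one]
      exact ⟨h.fareyNbr_fcomb_left isUnit_one.neg, h.fareyNbr_fcomb_right (-1)⟩
end
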